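/- Let A be an m×n complex matrix of rank k, let F be an m×k complex matrix whose column space equals the column space of A, and let H be an n×k complex matrix whose column space equals the column space of Aᴴ. Let B be an m×l complex matrix and D an n×l' complex matrix with rank(Bᴴ·F) = k and rank(Hᴴ·D) = k, let Z be a Moore–Penrose pseudoinverse of Bᴴ·F, and let Z' be a Moore–Penrose pseudoinverse of Hᴴ·D. Then the reconstruction equation holds: A = F·(Z·Bᴴ)·A·(D·Z')·Hᴴ. -/

import Mathlib

open Matrix

/-- `Z` is a Moore–Penrose pseudoinverse of `M`: it satisfies the four Penrose equations. -/
def IsMoorePenrose {m n : ℕ} (M : Matrix (Fin m) (Fin n) ℂ)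
    (Z : Matrix (Fin n) (Fin m) ℂ) : Prop :=
  M * Z * M = M ∧ Z * M * Z = Z ∧ (M * Z)ᴴ = M * Z ∧ (Z * M)ᴴ = Z * M

/-!
Since `Bᴴ * F` has full column rank `k`, its pseudoinverse is a left inverse: `Z * Bᴴ * F = 1`
(the matrix `Z * Bᴴ * F` is idempotent of full rank). Dually `Hᴴ * D * Z' = 1`. The column
condition on `F` factors `A = F * X` and the row condition on `H` factors `A = Yᴴ * Hᴴ`, so
`F * Z * Bᴴ` fixes `A` from the left and `D * Z' * Hᴴ` fixes it from the right.
-/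

namespace Matrix

section Field

variable {K : Type*} [Field K] {m n : Type*} [Fintype n]

theorem isUnit_of_rank_eq_card [DecidableEq n] {P : Matrix n n K} (hP : P.rank = Fintype.card n) :
    IsUnit P := by
  have hrange : LinearMap.range P.mulVecLin = ⊤ := Submodule.eq_top_of_finrank_eq <| by
    rw [← Matrix.rank, hP, Module.finrank_fintype_fun_eq_card]
  exact mulVec_surjective_iff_isUnit.mp (LinearMap.range_eq_top.mp hrange)

theorem mul_eq_one_of_mul_mul_eq_self_of_rank_eq_card_width [Fintype m] [DecidableEq n]
    {M : Matrix m n K} {Z : Matrix n m K} (hMZM : M * Z * M = M) (hM : M.rank = Fintype.card n) :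
    Z * M = 1 := by
  have hrank : (Z * M).rank = Fintype.card n := le_antisymm (rank_le_card_width _) <| calc
    Fintype.card n = (M * (Z * M)).rank := by rw [← Matrix.mul_assoc, hMZM, hM]
    _ ≤ (Z * M).rank := rank_mul_le_right _ _
  refine (IsIdempotentElem.iff_eq_one_of_isUnit (isUnit_of_rank_eq_card hrank)).mp ?_
  rw [IsIdempotentElem, Matrix.mul_assoc, ← Matrix.mul_assoc M, hMZM]

theorem mul_eq_one_of_mul_mul_eq_self_of_rank_eq_card_height [Fintype m] [DecidableEq m]
    {M : Matrix m n K} {Z : Matrix n m K} (hMZM : M * Z * M = M) (hM : M.rank = Fintype.card m) :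
    M * Z = 1 := by
  have hrank : (M * Z).rank = Fintype.card m := le_antisymm (rank_le_card_width _) <| calc
    Fintype.card m = (M * Z * M).rank := by rw [hMZM, hM]
    _ ≤ (M * Z).rank := rank_mul_le_left _ _
  refine (IsIdempotentElem.iff_eq_one_of_isUnit (isUnit_of_rank_eq_card hrank)).mp ?_
  rw [IsIdempotentElem, ← Matrix.mul_assoc, hMZM]

end Field

theorem exists_eq_mul_of_range_mulVecLin_le {R : Type*} [CommSemiring R] {m n k : Type*}
    [Fintype n] [DecidableEq n] [Fintype k] {A : Matrix m n R} {F : Matrix m k R}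
    (h : LinearMap.range A.mulVecLin ≤ LinearMap.range F.mulVecLin) :
    ∃ X : Matrix k n R, A = F * X := by
  choose X hX using fun j : n ↦ h ⟨Pi.single j 1, rfl⟩
  refine ⟨(of X)ᵀ, ?_⟩
  ext i j
  have hcol := congrFun (hX j) i
  simp only [mulVecLin_apply, mulVec_single_one, col_apply] at hcol
  rw [← hcol, mul_apply, mulVec, dotProduct]
  simp

end Matrix

theorem generalized_reconstruction_equation_general
    {m n k l l' : ℕ}
    (A : Matrix (Fin m) (Fin n) ℂ)
    (F : Matrix (Fin m) (Fin k) ℂ)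
    (hF : LinearMap.range F.mulVecLin = LinearMap.range A.mulVecLin)
    (H : Matrix (Fin n) (Fin k) ℂ)
    (hH : LinearMap.range H.mulVecLin = LinearMap.range Aᴴ.mulVecLin)
    (B : Matrix (Fin m) (Fin l) ℂ) (D : Matrix (Fin n) (Fin l') ℂ)
    (hBF : (Bᴴ * F).rank = k) (hHD : (Hᴴ * D).rank = k)
    (Z : Matrix (Fin k) (Fin l) ℂ) (hZ : IsMoorePenrose (Bᴴ * F) Z)
    (Z' : Matrix (Fin l') (Fin k) ℂ) (hZ' : IsMoorePenrose (Hᴴ * D) Z') :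
    A = F * (Z * Bᴴ) * A * (D * Z') * Hᴴ := by
  have hZ_left : Z * (Bᴴ * F) = 1 :=
    mul_eq_one_of_mul_mul_eq_self_of_rank_eq_card_width hZ.1 (by rw [hBF, Fintype.card_fin])
  have hZ'_right : Hᴴ * D * Z' = 1 :=
    mul_eq_one_of_mul_mul_eq_self_of_rank_eq_card_height hZ'.1 (by rw [hHD, Fintype.card_fin])
  obtain ⟨X, hX⟩ := exists_eq_mul_of_range_mulVecLin_le hF.ge
  obtain ⟨Y, hY⟩ := exists_eq_mul_of_range_mulVecLin_le hH.ge
  have hA : A = Yᴴ * Hᴴ := by rw [← conjTranspose_mul, ← hY, conjTranspose_conjTranspose]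
  have hF_fixes : F * (Z * Bᴴ) * A = A := by
    rw [hX, Matrix.mul_assoc, Matrix.mul_assoc, ← Matrix.mul_assoc Bᴴ, ← Matrix.mul_assoc Z,
      hZ_left, Matrix.one_mul]
  have hH_fixes : A * (D * Z') * Hᴴ = A := by
    rw [hA, Matrix.mul_assoc, Matrix.mul_assoc, ← Matrix.mul_assoc Hᴴ, ← Matrix.mul_assoc Hᴴ,
      hZ'_right, Matrix.one_mul]
  rw [hF_fixes, hH_fixes]

theorem generalized_reconstruction_equation
    {m n k l l' : ℕ}
    (A : Matrix (Fin m) (Fin n) ℂ) (hA : A.rank = k)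
    (F : Matrix (Fin m) (Fin k) ℂ)
    (hF : LinearMap.range F.mulVecLin = LinearMap.range A.mulVecLin)
    (H : Matrix (Fin n) (Fin k) ℂ)
    (hH : LinearMap.range H.mulVecLin = LinearMap.range Aᴴ.mulVecLin)
    (B : Matrix (Fin m) (Fin l) ℂ) (D : Matrix (Fin n) (Fin l') ℂ)
    (hBF : (Bᴴ * F).rank = k) (hHD : (Hᴴ * D).rank = k)
    (Z : Matrix (Fin k) (Fin l) ℂ) (hZ : IsMoorePenrose (Bᴴ * F) Z)
    (Z' : Matrix (Fin l') (Fin k) ℂ) (hZ' : IsMoorePenrose (Hᴴ * D) Z') :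
    A = F * (Z * Bᴴ) * A * (D * Z') * Hᴴ :=
  generalized_reconstruction_equation_general A F hF H hH B D hBF hHD Z hZ Z' hZ'
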